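/- arXiv:2503.02052 — 3 statements merged into one kernel-verified Lean document; each statement's English description precedes it below -/
import Mathlib

section
/- Let T be a triangulated category with a bounded t-structure with heart A, and let A' ⊆ A be a Serre subcategory. Then the smallest triangulated subcategory of T containing A' coincides with the thick closure of A' in T. -/
open CategoryTheory CategoryTheory.Limits CategoryTheory.Pretriangulated

universe v u v' u'

section TriangulatedDefs

variable (T : Type u) [Category.{v} T] [HasZeroObject T] [Preadditive T] [HasShift T ℤ]
  [∀ n : ℤ, (shiftFunctor T n).Additive] [Pretriangulated T]

/-- A (strictly full) triangulated subcategory, as a predicate on objects. -/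
structure IsTriangulatedSub (P : Set T) : Prop where
  zero : ∀ X : T, IsZero X → X ∈ P
  iso : ∀ {X Y : T}, (X ≅ Y) → X ∈ P → Y ∈ P
  shift : ∀ (X : T) (n : ℤ), X ∈ P → (X⟦n⟧ : T) ∈ P
  ext₂ : ∀ Tr : Triangle T, Tr ∈ (distTriang T) → Tr.obj₁ ∈ P → Tr.obj₃ ∈ P → Tr.obj₂ ∈ P

/-- A thick triangulated subcategory: also closed under direct summands (retracts). -/
structure IsThickSub (P : Set T) extends IsTriangulatedSub T P : Prop where
  summand : ∀ {X Y : T} (i : X ⟶ Y) (r : Y ⟶ X), i ≫ r = 𝟙 X → Y ∈ P → X ∈ P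

/-- The thick closure of a set of objects: the smallest thick full triangulated
subcategory containing it. -/
def thickClosure (S : Set T) : Set T :=
  {X | ∀ P : Set T, IsThickSub T P → S ⊆ P → X ∈ P}

/-- The smallest full triangulated subcategory containing a set of objects. -/
def triangClosure (S : Set T) : Set T :=
  {X | ∀ P : Set T, IsTriangulatedSub T P → S ⊆ P → X ∈ P}

/-- A classical generator: an object whose thick closure is the whole category. -/
def IsClassicalGenerator (G : T) : Prop := ∀ X : T, X ∈ thickClosure T {G}

end TriangulatedDefs

section SerreDefs

variable (A : Type u') [Category.{v'} A] [Abelian A]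

/-- A Serre subcategory of an abelian category, as a predicate on objects:
closed under subobjects, quotient objects and extensions. -/
structure IsSerreSub (P : Set A) : Prop where
  zero : ∀ X : A, IsZero X → X ∈ P
  subobj : ∀ {X Y : A} (f : X ⟶ Y), Mono f → Y ∈ P → X ∈ P
  quot : ∀ {X Y : A} (f : X ⟶ Y), Epi f → X ∈ P → Y ∈ P
  extension : ∀ S : ShortComplex A, S.ShortExact → S.X₁ ∈ P → S.X₃ ∈ P → S.X₂ ∈ P

/-- The Serre subcategory generated by a set of objects. -/
def serreClosure (S : Set A) : Set A :=
  {X | ∀ P : Set A, IsSerreSub A P → S ⊆ P → X ∈ P}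

/-- A generator of an abelian category: an object not contained in any proper
Serre subcategory. -/
def IsAbGenerator (G : A) : Prop :=
  ∀ P : Set A, IsSerreSub A P → P ≠ Set.univ → G ∉ P

end SerreDefs

section THeart

variable (T : Type u) [Category.{v} T] [HasZeroObject T] [Preadditive T] [HasShift T ℤ]
  [∀ n : ℤ, (shiftFunctor T n).Additive] [Pretriangulated T]
variable (A : Type u') [Category.{v'} A] [Abelian A]

/-- A bounded t-structure on the triangulated category `T`, together with an
identification of its heart with the abelian category `A` and the associated
cohomology functors `H i : T ⥤ A` (with their long exact sequences). -/
structure BoundedTHeart where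
  /-- the underlying t-structure -/
  t : Triangulated.TStructure T
  /-- the t-structure is bounded -/
  bounded : ∀ X : T, ∃ n : ℕ, t.le (n : ℤ) X ∧ t.ge (-(n : ℤ)) X
  /-- the inclusion of the heart -/
  ι : A ⥤ T
  ι_full : ι.Full
  ι_faithful : ι.Faithful
  ι_heart : ∀ a : A, t.le 0 (ι.obj a) ∧ t.ge 0 (ι.obj a)
  ι_essSurj : ∀ X : T, t.le 0 X → t.ge 0 X → ∃ a : A, Nonempty (ι.obj a ≅ X)
  /-- the cohomology functors of the t-structure -/
  H : ℤ → T ⥤ A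
  H_additive : ∀ i : ℤ, (H i).Additive
  H_heart : ∀ a : A, Nonempty ((H 0).obj (ι.obj a) ≅ a)
  H_heart_zero : ∀ (a : A) (i : ℤ), i ≠ 0 → IsZero ((H i).obj (ι.obj a))
  H_shift : ∀ (i j : ℤ) (X : T), Nonempty ((H i).obj (X⟦j⟧) ≅ (H (i + j)).obj X)
  H_LE_iff : ∀ (n : ℤ) (X : T), t.le n X ↔ ∀ i : ℤ, n < i → IsZero ((H i).obj X)
  H_GE_iff : ∀ (n : ℤ) (X : T), t.ge n X ↔ ∀ i : ℤ, i < n → IsZero ((H i).obj X)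
  /-- connecting morphisms of the long exact cohomology sequence of a triangle -/
  δ : ∀ (Tr : Triangle T), Tr ∈ (distTriang T) → ∀ i : ℤ,
    ((H i).obj Tr.obj₃ ⟶ (H (i + 1)).obj Tr.obj₁)
  les₁ : ∀ (Tr : Triangle T) (_ : Tr ∈ (distTriang T)) (i : ℤ),
    ∃ w : (H i).map Tr.mor₁ ≫ (H i).map Tr.mor₂ = 0, (ShortComplex.mk _ _ w).Exact
  les₂ : ∀ (Tr : Triangle T) (hTr : Tr ∈ (distTriang T)) (i : ℤ),
    ∃ w : (H i).map Tr.mor₂ ≫ δ Tr hTr i = 0, (ShortComplex.mk _ _ w).Exact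
  les₃ : ∀ (Tr : Triangle T) (hTr : Tr ∈ (distTriang T)) (i : ℤ),
    ∃ w : δ Tr hTr i ≫ (H (i + 1)).map Tr.mor₁ = 0, (ShortComplex.mk _ _ w).Exact

variable {T A}

/-- The full subcategory of objects of `T` all of whose cohomologies (with respect to
the given bounded t-structure) lie in the subcategory `A'` of the heart. -/
def BoundedTHeart.cohIn (B : BoundedTHeart T A) (A' : Set A) : Set T :=
  {E : T | ∀ i : ℤ, (B.H i).obj E ∈ A'}

end THeart

variable {T : Type u} [Category.{v} T] [HasZeroObject T] [Preadditive T] [HasShift T ℤ]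
  [∀ n : ℤ, (shiftFunctor T n).Additive] [Pretriangulated T]
variable {A : Type u'} [Category.{v'} A] [Abelian A]

/-!
Both subcategories coincide with the subcategory `B.cohIn A'` of objects all of whose
cohomology objects lie in `A'`. Since `A'` is Serre, the long exact cohomology sequence shows
that `B.cohIn A'` is triangulated, and it is closed under direct summands because `H i` sends a
retract to a subobject; so it contains the thick closure. Conversely, an object of `B.cohIn A'`
lies in the triangulated closure of `A'` by induction on its cohomological amplitude (finite by
boundedness): a truncation triangle splits it into two pieces of smaller amplitude whose
cohomology is a subobject, resp. a quotient, of its own, and an object of amplitude zero is a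
shift of an object of `A'`.
-/

section Serre

variable {C : Type*} [Category C] [Abelian C] {P : Set C}

lemma IsSerreSub.mem_of_iso (hP : IsSerreSub C P) {X Y : C} (e : X ≅ Y) (hY : Y ∈ P) :
    X ∈ P :=
  hP.subobj e.hom inferInstance hY

/-- `S.X₂` is an extension of the image of `S.g`, a subobject of `S.X₃`, by the kernel of `S.g`,
a quotient of `S.X₁`. -/
lemma IsSerreSub.mem_of_exact (hP : IsSerreSub C P) {S : ShortComplex C} (hS : S.Exact)
    (h₁ : S.X₁ ∈ P) (h₃ : S.X₃ ∈ P) : S.X₂ ∈ P := by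
  have hker : kernel S.g ∈ P := by
    have := hS.epi_toCycles
    exact hP.quot (S.toCycles ≫ S.cyclesIsoKernel.hom) (epi_comp _ _) h₁
  have hcoim : Abelian.coimage S.g ∈ P :=
    hP.subobj (Abelian.factorThruCoimage S.g) inferInstance h₃
  let E := ShortComplex.mk _ _ (cokernel.condition (kernel.ι S.g))
  have hE : E.ShortExact := ⟨E.exact_of_g_is_cokernel (cokernelIsCokernel (kernel.ι S.g))⟩
  exact hP.extension E hE hker hcoim

end Serre

section Triangulated

variable {T : Type*} [Category T] [HasZeroObject T] [Preadditive T] [HasShift T ℤ]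
  [∀ n : ℤ, (shiftFunctor T n).Additive] [Pretriangulated T]

lemma IsTriangulatedSub.mem_of_shift_mem {P : Set T} (hP : IsTriangulatedSub T P) {X : T}
    (n : ℤ) (h : X⟦n⟧ ∈ P) : X ∈ P :=
  hP.iso ((shiftEquiv T n).unitIso.app X).symm (hP.shift _ (-n) h)

lemma triangClosure_isTriangulatedSub (S : Set T) : IsTriangulatedSub T (triangClosure T S) where
  zero X hX _ hP _ := hP.zero X hX
  iso e hX P hP hS := hP.iso e (hX P hP hS)
  shift X n hX P hP hS := hP.shift X n (hX P hP hS)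
  ext₂ Tr hTr h₁ h₃ P hP hS := hP.ext₂ Tr hTr (h₁ P hP hS) (h₃ P hP hS)

lemma subset_triangClosure (S : Set T) : S ⊆ triangClosure T S :=
  fun _ hX _ _ hS => hS hX

lemma triangClosure_subset {S P : Set T} (hP : IsTriangulatedSub T P) (hS : S ⊆ P) :
    triangClosure T S ⊆ P :=
  fun _ hX => hX P hP hS

lemma triangClosure_subset_thickClosure (S : Set T) : triangClosure T S ⊆ thickClosure T S :=
  fun _ hX P hP hS => hX P hP.toIsTriangulatedSub hS

lemma thickClosure_subset {S P : Set T} (hP : IsThickSub T P) (hS : S ⊆ P) :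
    thickClosure T S ⊆ P :=
  fun _ hX => hX P hP hS

end Triangulated

namespace BoundedTHeart

variable {T : Type*} [Category T] [HasZeroObject T] [Preadditive T] [HasShift T ℤ]
  [∀ n : ℤ, (shiftFunctor T n).Additive] [Pretriangulated T]
  {A : Type*} [Category A] [Abelian A] (B : BoundedTHeart T A) {A' : Set A}

lemma mono_H_map_mor₁_of_ge {Tr : Triangle T} (hTr : Tr ∈ distTriang T) {a i : ℤ}
    (h₃ : B.t.ge (a + 1) Tr.obj₃) (hi : i ≤ a) : Mono ((B.H i).map Tr.mor₁) := by
  obtain ⟨j, rfl⟩ : ∃ j, i = j + 1 := ⟨i - 1, by omega⟩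
  obtain ⟨_, hw⟩ := B.les₃ Tr hTr j
  exact hw.mono_g (((B.H_GE_iff _ _).1 h₃ j (by omega)).eq_of_src _ _)

lemma epi_H_map_mor₂_of_le {Tr : Triangle T} (hTr : Tr ∈ distTriang T) {a i : ℤ}
    (h₁ : B.t.le a Tr.obj₁) (hi : a + 1 ≤ i) : Epi ((B.H i).map Tr.mor₂) := by
  obtain ⟨_, hw⟩ := B.les₂ Tr hTr i
  exact hw.epi_f (((B.H_LE_iff _ _).1 h₁ (i + 1) (by omega)).eq_of_tgt _ _)

lemma image_ι_subset_cohIn (hA' : IsSerreSub A A') : B.ι.obj '' A' ⊆ B.cohIn A' := by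
  rintro _ ⟨a, ha, rfl⟩ i
  by_cases hi : i = 0
  · subst hi
    exact hA'.mem_of_iso (B.H_heart a).some ha
  · exact hA'.zero _ (B.H_heart_zero a i hi)

lemma cohIn_isThickSub (hA' : IsSerreSub A A') : IsThickSub T (B.cohIn A') where
  zero X hX i :=
    have := B.H_additive i
    hA'.zero _ ((B.H i).map_isZero hX)
  iso e hX i := hA'.mem_of_iso ((B.H i).mapIso e).symm (hX i)
  shift X n hX i := hA'.mem_of_iso (B.H_shift i n X).some (hX (i + n))
  ext₂ Tr hTr h₁ h₃ i := hA'.mem_of_exact (B.les₁ Tr hTr i).choose_spec (h₁ i) (h₃ i)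
  summand s r hsr hY i := by
    have : IsSplitMono ((B.H i).map s) :=
      ⟨⟨(B.H i).map r, by rw [← Functor.map_comp, hsr, CategoryTheory.Functor.map_id]⟩⟩
    exact hA'.subobj ((B.H i).map s) inferInstance (hY i)

lemma mem_triangClosure_of_le_of_ge (hA' : IsSerreSub A A') {E : T} {a : ℤ}
    (hle : B.t.le a E) (hge : B.t.ge a E) (hE : E ∈ B.cohIn A') :
    E ∈ triangClosure T (B.ι.obj '' A') := by
  obtain ⟨c, ⟨e⟩⟩ := B.ι_essSurj (E⟦a⟧) (B.t.le_shift a a 0 (by omega) E hle)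
    (B.t.ge_shift a a 0 (by omega) E hge)
  have hc : c ∈ A' := hA'.mem_of_iso
    ((B.H_heart c).some.symm ≪≫ (B.H 0).mapIso e ≪≫ (B.H_shift 0 a E).some) (hE (0 + a))
  have hshift : E⟦a⟧ ∈ triangClosure T (B.ι.obj '' A') :=
    (triangClosure_isTriangulatedSub _).iso e (subset_triangClosure _ ⟨c, hc, rfl⟩)
  exact (triangClosure_isTriangulatedSub _).mem_of_shift_mem a hshift

lemma mem_triangClosure_of_amplitude (hA' : IsSerreSub A A') (n : ℕ) {E : T} {a : ℤ}
    (hle : B.t.le (a + n) E) (hge : B.t.ge a E) (hE : E ∈ B.cohIn A') :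
    E ∈ triangClosure T (B.ι.obj '' A') := by
  induction n generalizing a E with
  | zero => exact B.mem_triangClosure_of_le_of_ge hA' (by simpa using hle) hge hE
  | succ n ih =>
    obtain ⟨X, Y, hX, hY, f, g, h, hT⟩ := B.t.exists_triangle E a (a + 1) rfl
    have hmono (i : ℤ) (hi : i ≤ a) : Mono ((B.H i).map f) := B.mono_H_map_mor₁_of_ge hT hY hi
    have hepi (i : ℤ) (hi : a + 1 ≤ i) : Epi ((B.H i).map g) := B.epi_H_map_mor₂_of_le hT hX hi
    have hXA' : X ∈ B.cohIn A' := fun i =>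
      if hi : i ≤ a then hA'.subobj _ (hmono i hi) (hE i)
      else hA'.zero _ ((B.H_LE_iff a X).1 hX i (by omega))
    have hYA' : Y ∈ B.cohIn A' := fun i =>
      if hi : a + 1 ≤ i then hA'.quot _ (hepi i hi) (hE i)
      else hA'.zero _ ((B.H_GE_iff (a + 1) Y).1 hY i (by omega))
    have hXge : B.t.ge a X := (B.H_GE_iff a X).2 fun i hi =>
      have := hmono i hi.le
      ((B.H_GE_iff a E).1 hge i hi).of_mono ((B.H i).map f)
    have hYle : B.t.le (a + 1 + n) Y := (B.H_LE_iff _ Y).2 fun i hi =>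
      have := hepi i (by omega)
      ((B.H_LE_iff _ E).1 hle i (by push_cast; omega)).of_epi ((B.H i).map g)
    exact (triangClosure_isTriangulatedSub _).ext₂ _ hT
      (ih (B.t.le_monotone (by omega) X hX) hXge hXA') (ih hYle hY hYA')

lemma triangClosure_eq_cohIn (hA' : IsSerreSub A A') :
    triangClosure T (B.ι.obj '' A') = B.cohIn A' := by
  refine (triangClosure_subset (B.cohIn_isThickSub hA').toIsTriangulatedSub
    (B.image_ι_subset_cohIn hA')).antisymm fun E hE => ?_
  obtain ⟨m, hle, hge⟩ := B.bounded E
  exact B.mem_triangClosure_of_amplitude hA' (2 * m)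
    (B.t.le_monotone (by push_cast; omega) E hle) hge hE

end BoundedTHeart

/-- for a Serre subcategory `A'` of the heart of a bounded t-structure
on `T`, the smallest triangulated subcategory of `T` containing `A'` coincides with the
thick closure of `A'` in `T`. -/
theorem stmt2 (B : BoundedTHeart T A) (A' : Set A) (hA' : IsSerreSub A A') :
    triangClosure T (B.ι.obj '' A') = thickClosure T (B.ι.obj '' A') := by
  refine (triangClosure_subset_thickClosure _).antisymm
    (thickClosure_subset ?_ (subset_triangClosure _))
  rw [B.triangClosure_eq_cohIn hA']
  exact B.cohIn_isThickSub hA'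
end

section
/- Let C be a triangulated category with a bounded t-structure with heart A, and suppose G ∈ C is a classical generator (its thick closure is all of C). Then G' := ⊕_{i ∈ ℤ} H^i(G) (a finite direct sum since the t-structure is bounded) is a generator of A, i.e., G' is not contained in any proper Serre subcategory of A. -/
/-!
For a Serre subcategory `P` of the heart, the objects of `T` all of whose cohomologies lie in `P`
form a thick subcategory: the long exact cohomology sequence puts `H^i` of the middle term of a
triangle between `H^i` of the outer terms, and a Serre subcategory is closed under such middle
terms. If `P` contains the summands `H^i(G)` of `G'`, this thick subcategory contains `G`, hence
is everything; in particular every `a ≅ H^0(a)` of the heart lies in `P`.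
-/

open CategoryTheory CategoryTheory.Limits CategoryTheory.Pretriangulated

universe v u v' u'

variable {T : Type u} [Category.{v} T] [HasZeroObject T] [Preadditive T] [HasShift T ℤ]
  [∀ n : ℤ, (shiftFunctor T n).Additive] [Pretriangulated T]
variable {A : Type u'} [Category.{v'} A] [Abelian A]

attribute [local instance] CategoryTheory.Abelian.hasFiniteBiproducts

namespace IsSerreSub

variable {P : Set A}

lemma mem_of_iso_s5 (hP : IsSerreSub A P) {X Y : A} (e : X ≅ Y) (hX : X ∈ P) : Y ∈ P :=
  hP.subobj e.inv inferInstance hX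

lemma mem_of_retract (hP : IsSerreSub A P) {X Y : A} (i : X ⟶ Y) (r : Y ⟶ X)
    (h : i ≫ r = 𝟙 X) (hY : Y ∈ P) : X ∈ P :=
  haveI : IsSplitMono i := IsSplitMono.mk' ⟨r, h⟩
  hP.subobj i inferInstance hY

lemma mem_of_mem_biproduct (hP : IsSerreSub A P) {J : Type*} (f : J → A) [HasBiproduct f]
    (j : J) (h : (⨁ f) ∈ P) : f j ∈ P :=
  hP.subobj (biproduct.ι f j) inferInstance h

lemma mem_of_exact_s5 (hP : IsSerreSub A P) {X₁ X₂ X₃ : A} (f : X₁ ⟶ X₂) (g : X₂ ⟶ X₃)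
    (w : f ≫ g = 0) (h : (ShortComplex.mk f g w).Exact) (h₁ : X₁ ∈ P) (h₃ : X₃ ∈ P) :
    X₂ ∈ P := by
  have hker : kernel g ∈ P := by
    have hepi : Epi (ShortComplex.mk f g w).toCycles :=
      (ShortComplex.exact_iff_epi_toCycles _).1 h
    exact hP.mem_of_iso_s5 (ShortComplex.cyclesIsoKernel _) (hP.quot _ hepi h₁)
  have hcoim : Abelian.coimage g ∈ P :=
    hP.subobj (Abelian.factorThruCoimage g) inferInstance h₃
  -- `X₂` is an extension of `coimage g = cokernel (kernel.ι g)` by `kernel g`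
  have hse : (ShortComplex.mk (kernel.ι g) (cokernel.π (kernel.ι g))
      (cokernel.condition _)).ShortExact :=
    .mk' (ShortComplex.exact_of_g_is_cokernel _ (cokernelIsCokernel _)) inferInstance
      inferInstance
  exact hP.extension _ hse hker hcoim

end IsSerreSub

namespace BoundedTHeart

lemma isThickSub_cohIn (B : BoundedTHeart T A) {P : Set A} (hP : IsSerreSub A P) :
    IsThickSub T (B.cohIn P) where
  zero X hX i :=
    haveI := B.H_additive i
    hP.zero _ ((B.H i).map_isZero hX)
  iso e hX i := hP.mem_of_iso_s5 ((B.H i).mapIso e) (hX i)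
  shift X n hX i := hP.mem_of_iso_s5 (B.H_shift i n X).some.symm (hX (i + n))
  ext₂ Tr hTr h₁ h₃ i :=
    have ⟨w, hexact⟩ := B.les₁ Tr hTr i
    hP.mem_of_exact_s5 _ _ w hexact (h₁ i) (h₃ i)
  summand i r h hY j :=
    hP.mem_of_retract ((B.H j).map i) ((B.H j).map r)
      (by rw [← (B.H j).map_comp, h, (B.H j).map_id]) (hY j)

lemma eq_univ_of_cohomology_mem (B : BoundedTHeart T A) {P : Set A} (hP : IsSerreSub A P)
    {G : T} (hG : IsClassicalGenerator T G) (hGP : ∀ i : ℤ, (B.H i).obj G ∈ P) :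
    P = Set.univ := by
  have hcoh : ∀ X : T, X ∈ B.cohIn P := fun X =>
    hG X _ (B.isThickSub_cohIn hP) (Set.singleton_subset_iff.2 hGP)
  exact Set.eq_univ_of_forall fun a => hP.mem_of_iso_s5 (B.H_heart a).some (hcoh (B.ι.obj a) 0)

end BoundedTHeart

/-- if `G` is a classical generator of `C`, then
`G' = ⊕ᵢ H^i(G)` (a finite direct sum, by boundedness) is a generator of the heart `A`,
i.e. `G'` lies in no proper Serre subcategory of `A`. -/
theorem stmt5 (B : BoundedTHeart T A) (G : T) (hG : IsClassicalGenerator T G)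
    (s : Finset ℤ) (hs : ∀ i : ℤ, i ∉ s → IsZero ((B.H i).obj G))
    (G' : A) (hG' : Nonempty (G' ≅ ⨁ fun i : s => (B.H (i : ℤ)).obj G)) :
    IsAbGenerator A G' := by
  intro P hP hne hG'P
  obtain ⟨e⟩ := hG'
  refine hne (B.eq_univ_of_cohomology_mem hP hG fun i => ?_)
  by_cases hi : i ∈ s
  · exact hP.mem_of_mem_biproduct (fun j : s => (B.H (j : ℤ)).obj G) ⟨i, hi⟩
      (hP.mem_of_iso_s5 e hG'P)
  · exact hP.zero _ (hs i hi)
end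

section
/- Let C be a triangulated category with a bounded t-structure with heart A. Then the natural map K_0(A) → K_0(C), [X] ↦ [X], is an isomorphism of abelian groups. -/
/-!
The Euler characteristic `E ↦ ∑ᵢ (-1)^i [Hⁱ E]` is additive on distinguished triangles: the long
exact cohomology sequence splits into short exact sequences of kernels, and the resulting alternating
sum telescopes. Hence it descends to `K₀(T) → K₀(A)`, which is left inverse to the natural map since
an object of the heart has cohomology only in degree `0`. The natural map is onto because truncation
triangles split every object, by induction on its cohomological amplitude, into shifted objects of the
heart, and `[X⟦n⟧] = (-1)^n [X]`.
-/

open CategoryTheory CategoryTheory.Limits CategoryTheory.Pretriangulated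

universe v u v' u'

section K0Ab

variable (A : Type u') [Category.{v'} A] [Abelian A]

/-- Relations for the Grothendieck group of an abelian category. -/
def K0AbRel : AddSubgroup (FreeAbelianGroup A) :=
  AddSubgroup.closure {x | ∃ S : ShortComplex A, S.ShortExact ∧
    x = FreeAbelianGroup.of S.X₂ - FreeAbelianGroup.of S.X₁ - FreeAbelianGroup.of S.X₃}

/-- The Grothendieck group `K₀` of an abelian category: the free abelian group on
objects modulo the relations `[X₂] = [X₁] + [X₃]` for short exact sequences
`0 → X₁ → X₂ → X₃ → 0`. -/
def K0Ab := FreeAbelianGroup A ⧸ K0AbRel A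

noncomputable instance : AddCommGroup (K0Ab A) :=
  QuotientAddGroup.Quotient.addCommGroup (K0AbRel A)

/-- The class of an object in `K₀` of an abelian category. -/
def K0AbCls (X : A) : K0Ab A := QuotientAddGroup.mk (FreeAbelianGroup.of X)

end K0Ab

section K0Tri

variable (T : Type u) [Category.{v} T] [HasZeroObject T] [Preadditive T] [HasShift T ℤ]
  [∀ n : ℤ, (shiftFunctor T n).Additive] [Pretriangulated T]

/-- Relations for the Grothendieck group of a triangulated category. -/
def K0TriRel : AddSubgroup (FreeAbelianGroup T) :=
  AddSubgroup.closure {x | ∃ Tr : Triangle T, Tr ∈ (distTriang T) ∧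
    x = FreeAbelianGroup.of Tr.obj₂ - FreeAbelianGroup.of Tr.obj₁ - FreeAbelianGroup.of Tr.obj₃}

/-- The Grothendieck group `K₀` of a triangulated category: the free abelian group on
objects modulo the relations `[Y] = [X] + [Z]` for exact triangles `X → Y → Z → X[1]`. -/
def K0Tri := FreeAbelianGroup T ⧸ K0TriRel T

noncomputable instance : AddCommGroup (K0Tri T) :=
  QuotientAddGroup.Quotient.addCommGroup (K0TriRel T)

/-- The class of an object in `K₀` of a triangulated category. -/
def K0TriCls (X : T) : K0Tri T := QuotientAddGroup.mk (FreeAbelianGroup.of X)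

end K0Tri

variable {T : Type u} [Category.{v} T] [HasZeroObject T] [Preadditive T] [HasShift T ℤ]
  [∀ n : ℤ, (shiftFunctor T n).Additive] [Pretriangulated T]
variable {A : Type u'} [Category.{v'} A] [Abelian A]

section

open ZeroObject

lemma K0AbCls_of_shortExact {S : ShortComplex A} (hS : S.ShortExact) :
    K0AbCls A S.X₂ = K0AbCls A S.X₁ + K0AbCls A S.X₃ := by
  rw [← sub_eq_zero, sub_add_eq_sub_sub]
  exact (QuotientAddGroup.eq_zero_iff _).2 (AddSubgroup.subset_closure ⟨S, hS, rfl⟩)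

lemma K0AbCls_eq_zero_of_isZero {Z : A} (hZ : IsZero Z) : K0AbCls A Z = 0 := by
  have hS : (ShortComplex.mk (0 : Z ⟶ Z) (0 : Z ⟶ Z) comp_zero).ShortExact :=
    { exact := ShortComplex.exact_of_isZero_X₂ _ hZ
      mono_f := ⟨fun _ _ _ => hZ.eq_of_tgt _ _⟩
      epi_g := ⟨fun _ _ _ => hZ.eq_of_src _ _⟩ }
  simpa using (K0AbCls_of_shortExact hS).symm

lemma K0AbCls_congr {X Y : A} (e : X ≅ Y) : K0AbCls A X = K0AbCls A Y := by
  have hS : (ShortComplex.mk e.hom (0 : Y ⟶ 0) comp_zero).ShortExact :=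
    { exact := (ShortComplex.exact_iff_epi _ rfl).2 inferInstance
      mono_f := inferInstance
      epi_g := ⟨fun _ _ _ => (isZero_zero A).eq_of_src _ _⟩ }
  simpa [K0AbCls_eq_zero_of_isZero (isZero_zero A)] using (K0AbCls_of_shortExact hS).symm

-- From the short exact sequence `0 → ker f → X → ker g → 0`.
lemma K0AbCls_eq_add_of_exact {X Y Z : A} (f : X ⟶ Y) (g : Y ⟶ Z) (w : f ≫ g = 0)
    (hfg : (ShortComplex.mk f g w).Exact) :
    K0AbCls A X = K0AbCls A (kernel f) + K0AbCls A (kernel g) := by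
  let p : X ⟶ kernel g := kernel.lift g f w
  have hp : kernel.ι f ≫ p = 0 := by
    rw [← cancel_mono (kernel.ι g)]
    simp [p]
  let φ : ShortComplex.mk (kernel.ι f) p hp ⟶ ShortComplex.mk (kernel.ι f) f (kernel.condition f) :=
    { τ₁ := 𝟙 _, τ₂ := 𝟙 _, τ₃ := kernel.ι g }
  have : Mono φ.τ₃ := inferInstanceAs (Mono (kernel.ι g))
  have hS : (ShortComplex.mk (kernel.ι f) p hp).ShortExact :=
    { exact := (ShortComplex.exact_iff_of_epi_of_isIso_of_mono φ).2 (ShortComplex.exact_kernel f)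
      mono_f := inferInstance
      epi_g := (ShortComplex.mk f g w).exact_iff_epi_kernel_lift.1 hfg }
  exact K0AbCls_of_shortExact hS

lemma K0Ab.hom_ext {M : Type*} [AddCommGroup M] {f g : K0Ab A →+ M}
    (h : ∀ X : A, f (K0AbCls A X) = g (K0AbCls A X)) : f = g :=
  QuotientAddGroup.addMonoidHom_ext _ (FreeAbelianGroup.lift_ext _ _ h)

lemma K0TriCls_of_distinguished {Tr : Triangle T} (hTr : Tr ∈ distTriang T) :
    K0TriCls T Tr.obj₂ = K0TriCls T Tr.obj₁ + K0TriCls T Tr.obj₃ := by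
  rw [← sub_eq_zero, sub_add_eq_sub_sub]
  exact (QuotientAddGroup.eq_zero_iff _).2 (AddSubgroup.subset_closure ⟨Tr, hTr, rfl⟩)

lemma K0TriCls_eq_zero_of_isZero {Z : T} (hZ : IsZero Z) : K0TriCls T Z = 0 := by
  have hTr : Triangle.mk (𝟙 Z) 0 0 ∈ distTriang T :=
    (Triangle.distinguished_iff_of_isZero₃ _ hZ).2 (inferInstanceAs (IsIso (𝟙 Z)))
  simpa using (K0TriCls_of_distinguished hTr).symm

lemma K0TriCls_congr {X Y : T} (e : X ≅ Y) : K0TriCls T X = K0TriCls T Y := by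
  have hTr : Triangle.mk e.hom (0 : Y ⟶ 0) 0 ∈ distTriang T :=
    (Triangle.distinguished_iff_of_isZero₃ _ (isZero_zero T)).2 (inferInstanceAs (IsIso e.hom))
  simpa [K0TriCls_eq_zero_of_isZero (isZero_zero T)] using (K0TriCls_of_distinguished hTr).symm

lemma K0TriCls_shift_one (X : T) : K0TriCls T (X⟦(1 : ℤ)⟧) = -K0TriCls T X := by
  have := K0TriCls_of_distinguished (rot_of_distTriang _ (contractible_distinguished X))
  simp only [Triangle.rotate_obj₁, Triangle.rotate_obj₂, Triangle.rotate_obj₃,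
    contractibleTriangle_obj₁, contractibleTriangle_obj₂, contractibleTriangle_obj₃,
    K0TriCls_eq_zero_of_isZero (isZero_zero T)] at this
  exact eq_neg_of_add_eq_zero_right this.symm

lemma K0TriCls_shift (n : ℤ) (X : T) :
    K0TriCls T (X⟦n⟧) = (n.negOnePow : ℤ) • K0TriCls T X := by
  have succ (m : ℤ) : K0TriCls T (X⟦m + 1⟧) = -K0TriCls T (X⟦m⟧) := by
    rw [K0TriCls_congr ((shiftFunctorAdd' T m 1 (m + 1) rfl).app X), Functor.comp_obj,
      K0TriCls_shift_one]
  induction n using Int.induction_on with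
  | zero => simp [K0TriCls_congr ((shiftFunctorZero T ℤ).app X)]
  | succ m ih => simp [succ, ih, Int.negOnePow_succ]
  | pred m ih =>
    rw [← neg_neg (K0TriCls T _), ← succ, sub_add_cancel, ih]
    simp [Int.negOnePow_sub]

namespace K0Tri

variable {M : Type*} [AddCommGroup M] (f : T → M)
  (hf : ∀ Tr ∈ distTriang T, f Tr.obj₂ = f Tr.obj₁ + f Tr.obj₃)

noncomputable def lift : K0Tri T →+ M :=
  QuotientAddGroup.lift _ (FreeAbelianGroup.lift f) <| (AddSubgroup.closure_le _).2 <| by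
    rintro _ ⟨Tr, hTr, rfl⟩
    simp [hf Tr hTr]

@[simp]
lemma lift_cls (X : T) : lift f hf (K0TriCls T X) = f X :=
  FreeAbelianGroup.lift_apply_of f X

lemma eq_top_of_cls_mem {S : AddSubgroup (K0Tri T)} (hS : ∀ X : T, K0TriCls T X ∈ S) :
    S = ⊤ := by
  refine (AddSubgroup.eq_top_iff' S).2 fun z => ?_
  obtain ⟨w, rfl⟩ := QuotientAddGroup.mk_surjective z
  induction w using FreeAbelianGroup.induction_on with
  | zero => exact S.zero_mem
  | of X => exact hS X
  | neg X hX => exact S.neg_mem hX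
  | add x y hx hy => exact S.add_mem hx hy

end K0Tri

end

namespace CategoryTheory.Triangulated.TStructure

variable (t : TStructure T) {Tr : Triangle T} (hTr : Tr ∈ distTriang T) (n : ℤ)
include hTr

lemma ge_obj₁_of_distinguished (h₂ : t.ge n Tr.obj₂) (h₃ : t.ge (n - 1) Tr.obj₃) :
    t.ge n Tr.obj₁ := by
  rw [ge_iff_isGE] at *
  have := t.isGE_shift Tr.obj₃ (n - 1) (-1) n
  exact t.isGE₂ _ (inv_rot_of_distTriang _ hTr) n this h₂

lemma le_obj₃_of_distinguished (h₂ : t.le n Tr.obj₂) (h₁ : t.le (n + 1) Tr.obj₁) :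
    t.le n Tr.obj₃ := by
  rw [le_iff_isLE] at *
  have := t.isLE_shift Tr.obj₁ (n + 1) 1 n
  exact t.isLE₂ _ (rot_of_distTriang _ hTr) n h₂ this

end CategoryTheory.Triangulated.TStructure

lemma finsum_sub_comp_add_one_eq_zero {M : Type*} [AddCommGroup M] {v : ℤ → M}
    (hv : v.HasFiniteSupport) : ∑ᶠ i, (v i - v (i + 1)) = 0 := by
  have hv' : (fun i => v (i + 1)).HasFiniteSupport :=
    Set.Finite.preimage (add_left_injective 1).injOn hv
  rw [finsum_sub_distrib hv hv', sub_eq_zero]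
  exact (finsum_comp_equiv (Equiv.addRight 1)).symm

lemma hasFiniteSupport_smul_K0AbCls {ι : Type*} {F : ι → A} (hF : {i | ¬IsZero (F i)}.Finite)
    (c : ι → ℤ) : (fun i => c i • K0AbCls A (F i)).HasFiniteSupport :=
  hF.subset fun i hi hZ => hi (by simp [K0AbCls_eq_zero_of_isZero hZ])

namespace BoundedTHeart

variable (B : BoundedTHeart T A)

lemma finite_setOf_not_isZero_H (E : T) : {i | ¬IsZero ((B.H i).obj E)}.Finite := by
  obtain ⟨n, hle, hge⟩ := B.bounded E
  refine (Set.finite_Icc (-(n : ℤ)) n).subset fun i hi => ?_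
  by_contra h
  rcases not_and_or.1 h with h | h
  · exact hi ((B.H_GE_iff _ E).1 hge i (not_le.1 h))
  · exact hi ((B.H_LE_iff _ E).1 hle i (not_le.1 h))

-- A finite sum by `finite_setOf_not_isZero_H`; otherwise `∑ᶠ` would silently be `0`.
noncomputable def eulerChar (E : T) : K0Ab A :=
  ∑ᶠ i : ℤ, (i.negOnePow : ℤ) • K0AbCls A ((B.H i).obj E)

/-- Splitting the long exact cohomology sequence into short exact pieces, the alternating sum
telescopes to zero. -/
lemma eulerChar_of_distinguished {Tr : Triangle T} (hTr : Tr ∈ distTriang T) :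
    B.eulerChar Tr.obj₂ = B.eulerChar Tr.obj₁ + B.eulerChar Tr.obj₃ := by
  let c (E : T) (i : ℤ) : K0Ab A := (i.negOnePow : ℤ) • K0AbCls A ((B.H i).obj E)
  let v (i : ℤ) : K0Ab A := (i.negOnePow : ℤ) • K0AbCls A (kernel ((B.H i).map Tr.mor₁))
  have hc (E : T) : (c E).HasFiniteSupport :=
    hasFiniteSupport_smul_K0AbCls (B.finite_setOf_not_isZero_H E) _
  have hv : v.HasFiniteSupport := hasFiniteSupport_smul_K0AbCls
    ((B.finite_setOf_not_isZero_H Tr.obj₁).subset fun _ hi h => hi (IsZero.of_mono (kernel.ι _) h)) _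
  have key (i : ℤ) : c Tr.obj₁ i - c Tr.obj₂ i + c Tr.obj₃ i = v i - v (i + 1) := by
    obtain ⟨w₁, h₁⟩ := B.les₁ Tr hTr i
    obtain ⟨w₂, h₂⟩ := B.les₂ Tr hTr i
    obtain ⟨w₃, h₃⟩ := B.les₃ Tr hTr i
    simp only [c, v, K0AbCls_eq_add_of_exact _ _ w₁ h₁, K0AbCls_eq_add_of_exact _ _ w₂ h₂,
      K0AbCls_eq_add_of_exact _ _ w₃ h₃, Int.negOnePow_succ, Units.val_neg, neg_smul, smul_add]
    abel
  have hsum : ∑ᶠ i, (c Tr.obj₁ i - c Tr.obj₂ i + c Tr.obj₃ i) = 0 := by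
    simpa only [key] using finsum_sub_comp_add_one_eq_zero hv
  rw [finsum_add_distrib (f := fun i => c Tr.obj₁ i - c Tr.obj₂ i) ((hc _).sub (hc _)) (hc _),
    finsum_sub_distrib (hc _) (hc _)] at hsum
  rw [← sub_eq_zero, ← neg_eq_zero, ← hsum]
  simp only [eulerChar, c]
  abel

lemma eulerChar_ι (a : A) : B.eulerChar (B.ι.obj a) = K0AbCls A a := by
  rw [eulerChar, finsum_eq_single _ 0 fun i hi => by
    rw [K0AbCls_eq_zero_of_isZero (B.H_heart_zero a i hi), smul_zero]]
  simp [K0AbCls_congr (B.H_heart a).some]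

noncomputable def eulerCharHom : K0Tri T →+ K0Ab A :=
  K0Tri.lift B.eulerChar fun _ => B.eulerChar_of_distinguished

lemma eulerCharHom_comp {φ : K0Ab A →+ K0Tri T}
    (hφ : ∀ X : A, φ (K0AbCls A X) = K0TriCls T (B.ι.obj X)) :
    B.eulerCharHom.comp φ = AddMonoidHom.id _ :=
  K0Ab.hom_ext fun X => by simp [eulerCharHom, hφ, eulerChar_ι]

section

variable {S : AddSubgroup (K0Tri T)}
  (hS : ∀ a : A, K0TriCls T (B.ι.obj a) ∈ S)
include hS

lemma K0TriCls_mem_of_ge_of_le {n : ℤ} {E : T} (hge : B.t.ge n E) (hle : B.t.le n E) :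
    K0TriCls T E ∈ S := by
  obtain ⟨a, ⟨e⟩⟩ := B.ι_essSurj (E⟦n⟧) (B.t.le_shift n n 0 (add_zero n) E hle)
    (B.t.ge_shift n n 0 (add_zero n) E hge)
  have h : K0TriCls T E = (n.negOnePow : ℤ) • K0TriCls T (B.ι.obj a) := by
    rw [K0TriCls_congr e, K0TriCls_shift, smul_smul, ← Units.val_mul, Int.units_mul_self,
      Units.val_one, one_smul]
  exact h ▸ S.zsmul_mem (hS a) _

lemma K0TriCls_mem_of_ge_of_le_add (k : ℕ) :
    ∀ {n : ℤ} {E : T}, B.t.ge n E → B.t.le (n + k) E → K0TriCls T E ∈ S := by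
  induction k with
  | zero =>
    intro n E hge hle
    exact B.K0TriCls_mem_of_ge_of_le hS hge (by rwa [Nat.cast_zero, add_zero] at hle)
  | succ k ih =>
    intro n E hge hle
    obtain ⟨X, Y, hX, hY, f, g, h, hTr⟩ := B.t.exists_triangle E n (n + 1) rfl
    have hXge : B.t.ge n X :=
      B.t.ge_obj₁_of_distinguished hTr n hge (B.t.ge_antitone (by omega) _ hY)
    have hYle : B.t.le (n + 1 + k) Y :=
      B.t.le_obj₃_of_distinguished hTr _ (by rwa [add_assoc, add_comm 1, ← Nat.cast_succ])
        (B.t.le_monotone (by omega) _ hX)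
    rw [show K0TriCls T E = _ from K0TriCls_of_distinguished hTr]
    exact S.add_mem (B.K0TriCls_mem_of_ge_of_le hS hXge hX) (ih hY hYle)

lemma K0TriCls_mem (E : T) : K0TriCls T E ∈ S := by
  obtain ⟨n, hle, hge⟩ := B.bounded E
  exact B.K0TriCls_mem_of_ge_of_le_add hS (2 * n) hge (by simpa [two_mul] using hle)

end

end BoundedTHeart

/-- for a bounded t-structure with heart `A` on `C`, the natural map
`K₀(A) → K₀(C)`, `[X] ↦ [X]`, is an isomorphism of abelian groups. -/
theorem stmt13 (B : BoundedTHeart T A) (φ : K0Ab A →+ K0Tri T)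
    (hφ : ∀ X : A, φ (K0AbCls A X) = K0TriCls T (B.ι.obj X)) :
    Function.Bijective φ := by
  have hleft : Function.LeftInverse B.eulerCharHom φ :=
    DFunLike.congr_fun (B.eulerCharHom_comp hφ)
  refine ⟨hleft.injective, ?_⟩
  rw [← AddMonoidHom.range_eq_top]
  exact K0Tri.eq_top_of_cls_mem (B.K0TriCls_mem fun a => ⟨_, hφ a⟩)
end
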